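/- arXiv:1909.12735 — 4 statements merged into one kernel-verified Lean document; each statement's English description precedes it below -/
import Mathlib

section
/- Let A(y,∂) = Σ_i a_i(y)∂^i and B(y,∂) = Σ_j b_j(y)∂^j be pseudodifferential operators in one variable y. Then Res_{z=0} dz ( A(y,∂)(e^{yz}) · B(y,∂)(e^{-yz}) ) = Res_∂( A·B^* ), where A(y,∂)(e^{yz}) := Σ_i a_i(y) z^i e^{yz}, B(y,∂)(e^{-yz}) := Σ_j b_j(y)(-z)^j e^{-yz}, the z-residue extracts the coefficient of z^{-1} of the product of the two Laurent series in z (the exponentials cancel), and B^* is the formal adjoint of B. -/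
namespace ExtendedDToda

/-- Generalized binomial coefficient `C(n, j)` for an integer `n`:
`C(n,j) = n(n-1)⋯(n-j+1)/j!`. -/
def zchoose (n : ℤ) (j : ℕ) : ℤ :=
  if 0 ≤ n then ((n.toNat).choose j : ℤ)
  else (-1) ^ j * ((((j : ℤ) - 1 - n).toNat).choose j : ℤ)

/-- Pseudodifferential operators over `R`: formal series `Σ_{i ≤ N} f_i ∂^i`,
recorded by the left coefficient function `i ↦ f_i`, with support bounded above. -/
structure PDO (R : Type) [CommRing R] : Type where
  coeff : ℤ → R
  bdd : ∃ N : ℤ, ∀ n : ℤ, N < n → coeff n = 0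

namespace PDO

variable {R : Type} [CommRing R] (d : Derivation ℤ R R)

/-- The constant operator `f·∂^0`. -/
def ofR (f : R) : PDO R :=
  ⟨fun n => if n = 0 then f else 0, ⟨0, fun n hn => if_neg (by omega)⟩⟩

/-- The operator `∂^k`, `k ∈ ℤ`. -/
def Dpow (k : ℤ) : PDO R :=
  ⟨fun n => if n = k then (1 : R) else 0, ⟨k, fun n hn => if_neg (by omega)⟩⟩

def add (P Q : PDO R) : PDO R where
  coeff n := P.coeff n + Q.coeff n
  bdd := by
    obtain ⟨N, hN⟩ := P.bdd
    obtain ⟨M, hM⟩ := Q.bdd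
    exact ⟨max N M, fun n hn => by
      beta_reduce
      rw [hN n ((le_max_left N M).trans_lt hn),
        hM n ((le_max_right N M).trans_lt hn), add_zero]⟩

def neg (P : PDO R) : PDO R where
  coeff n := -P.coeff n
  bdd := by
    obtain ⟨N, hN⟩ := P.bdd
    exact ⟨N, fun n hn => by beta_reduce; rw [hN n hn, neg_zero]⟩

def sub (P Q : PDO R) : PDO R := add P (neg Q)

/-- The product of pseudodifferential operators, determined by the relation
`∂^n·f = Σ_{j ≥ 0} C(n,j) ∂^j(f) ∂^{n-j}` (valid for all `n ∈ ℤ`). -/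
noncomputable def mul (P Q : PDO R) : PDO R where
  coeff n := ∑ᶠ p : ℤ × ℕ,
    P.coeff p.1 * (zchoose p.1 p.2 • (⇑d)^[p.2] (Q.coeff (n - p.1 + p.2)))
  bdd := by
    obtain ⟨N, hN⟩ := P.bdd
    obtain ⟨M, hM⟩ := Q.bdd
    refine ⟨N + M, fun n hn => ?_⟩
    have hz : (⇑d) (0 : R) = 0 := by simp
    have h : ∀ p : ℤ × ℕ,
        P.coeff p.1 * (zchoose p.1 p.2 • (⇑d)^[p.2] (Q.coeff (n - p.1 + p.2))) = 0 := by
      intro p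
      by_cases hp : p.1 ≤ N
      · rw [hM _ (by omega), Function.iterate_fixed hz p.2, smul_zero, mul_zero]
      · rw [hN _ (by omega), zero_mul]
    beta_reduce
    rw [finsum_congr h, finsum_zero]

/-- The formal adjoint `(Σ_i f_i ∂^i)^* = Σ_i (-∂)^i f_i`. -/
noncomputable def adj (P : PDO R) : PDO R where
  coeff n := ∑ᶠ j : ℕ,
    (((-1 : ℤˣ) ^ (n + (j : ℤ)) : ℤˣ) : ℤ) •
      (zchoose (n + (j : ℤ)) j • (⇑d)^[j] (P.coeff (n + (j : ℤ))))
  bdd := by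
    obtain ⟨N, hN⟩ := P.bdd
    refine ⟨N, fun n hn => ?_⟩
    have hz : (⇑d) (0 : R) = 0 := by simp
    have h : ∀ j : ℕ,
        (((-1 : ℤˣ) ^ (n + (j : ℤ)) : ℤˣ) : ℤ) •
          (zchoose (n + (j : ℤ)) j • (⇑d)^[j] (P.coeff (n + (j : ℤ)))) = 0 := by
      intro j
      rw [hN _ (by omega), Function.iterate_fixed hz j, smul_zero, smul_zero]
    beta_reduce
    rw [finsum_congr h, finsum_zero]

/-- The residue of a pseudodifferential operator: the coefficient of `∂^{-1}`. -/
def Res (P : PDO R) : R := P.coeff (-1)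

/-- Powers of a pseudodifferential operator. -/
noncomputable def npow (P : PDO R) : ℕ → PDO R
  | 0 => Dpow 0
  | (k + 1) => mul d P (npow P k)

end PDO
end ExtendedDToda

/-!
Expanding `A·B^*` with `∂^i f = Σ_k C(i,k) ∂^k(f) ∂^{i-k}` and the definition of the adjoint,
`Res_∂(A·B^*)` becomes `Σ_{i,k,j} a_i C(i,k) C(s-1-i, j) (-1)^{s-1-i} ∂^s(b_{s-1-i})` with
`s = k + j`. For fixed `i` and `s`, Chu–Vandermonde sums `C(i,k) C(s-1-i, s-k)` over `k` to
`C(s-1, s)`, which vanishes unless `s = 0`. What survives is `Σ_i (-1)^{-1-i} a_i b_{-1-i}`, the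
`z`-residue after the substitution `j = -1 - i`.
-/

namespace ExtendedDToda

theorem zchoose_eq_choose (n : ℤ) (k : ℕ) : zchoose n k = Ring.choose n k := by
  rcases le_or_gt 0 n with hn | hn
  · rw [zchoose, if_pos hn, ← Ring.choose_natCast, Int.toNat_of_nonneg hn]
  · rw [zchoose, if_neg (not_le.mpr hn), ← neg_neg n, Ring.choose_neg,
      ← Ring.choose_natCast, Int.toNat_of_nonneg (by omega)]
    rw [neg_neg, Units.smul_def, Int.coe_negOnePow_natCast, smul_eq_mul]
    congr 2
    ring

theorem sum_range_zchoose_mul_zchoose_eq_ite (i : ℤ) (s : ℕ) :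
    ∑ k ∈ Finset.range (s + 1), zchoose i k * zchoose (-1 - i + s) (s - k)
      = if s = 0 then 1 else 0 := by
  simp only [zchoose_eq_choose]
  rw [← Finset.Nat.sum_antidiagonal_eq_sum_range_succ_mk
      (fun p => Ring.choose i p.1 * Ring.choose (-1 - i + s) p.2),
    ← Ring.add_choose_eq s (Commute.all _ _)]
  rcases s with _ | m
  · simp
  · rw [show i + (-1 - i + ((m + 1 : ℕ) : ℤ)) = (m : ℤ) by push_cast; ring,
      Ring.choose_natCast, Nat.choose_eq_zero_of_lt (Nat.lt_succ_self m)]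
    simp

theorem iterate_map_finset_sum {M F ι : Type*} [AddCommMonoid M] [FunLike F M M]
    [AddMonoidHomClass F M M] (f : F) (n : ℕ) (s : Finset ι) (g : ι → M) :
    f^[n] (∑ i ∈ s, g i) = ∑ i ∈ s, f^[n] (g i) := by
  induction n with
  | zero => rfl
  | succ n ih => simp only [Function.iterate_succ_apply', ih, map_sum]

theorem sum_range_sum_zchoose_mul_zchoose_smul {M : Type*} [AddCommGroup M] (i : ℤ) (g : ℕ → M)
    {K : ℕ} (hK : 0 < K) :
    ∑ s ∈ Finset.range K, ∑ k ∈ Finset.range (s + 1),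
      (zchoose i k * zchoose (-1 - i + s) (s - k)) • g s = g 0 := by
  simp only [← Finset.sum_smul, sum_range_zchoose_mul_zchoose_eq_ite, ite_smul, one_smul,
    zero_smul, Finset.sum_ite_eq', Finset.mem_range]
  exact if_pos hK

namespace PDO

variable {R : Type} [CommRing R] (d : Derivation ℤ R R)

theorem mul_coeff_eq_finsum_finsum (P Q : PDO R) (n : ℤ) :
    (mul d P Q).coeff n
      = ∑ᶠ (i : ℤ) (k : ℕ), P.coeff i * (zchoose i k • (⇑d)^[k] (Q.coeff (n - i + k))) := by
  obtain ⟨N, hN⟩ := P.bdd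
  obtain ⟨M, hM⟩ := Q.bdd
  refine finsum_curry _ ((Set.finite_Icc (n - M) N).prod (Set.finite_Iic (N + M - n).toNat)
    |>.subset fun p hp => ?_)
  rw [Function.mem_support] at hp
  have hp₁ : p.1 ≤ N := by
    by_contra h
    exact hp (by rw [hN p.1 (by omega), zero_mul])
  have hp₂ : n - p.1 + p.2 ≤ M := by
    by_contra h
    exact hp (by rw [hM (n - p.1 + p.2) (by omega), iterate_map_zero, smul_zero, mul_zero])
  simp only [Set.mem_prod, Set.mem_Icc, Set.mem_Iic]
  omega

section Adjoint

variable {B : PDO R} {M : ℤ} (hM : ∀ n, M < n → B.coeff n = 0)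
include hM

theorem adj_coeff_eq_zero {m : ℤ} (hm : M < m) : (adj d B).coeff m = 0 := by
  refine finsum_eq_zero_of_forall_eq_zero fun j => ?_
  rw [hM _ (by omega), iterate_map_zero, smul_zero, smul_zero]

theorem adj_coeff_eq_sum {m : ℤ} {K : ℕ} (hK : M < m + K) :
    (adj d B).coeff m = ∑ j ∈ Finset.range K, (((-1 : ℤˣ) ^ (m + (j : ℤ)) : ℤˣ) : ℤ) •
      (zchoose (m + (j : ℤ)) j • (⇑d)^[j] (B.coeff (m + (j : ℤ)))) := by
  refine finsum_eq_sum_of_support_subset _ fun j hj => ?_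
  by_contra hjK
  rw [Function.mem_support] at hj
  rw [Finset.coe_range, Set.mem_Iio, not_lt] at hjK
  exact hj (by rw [hM _ (by omega), iterate_map_zero, smul_zero, smul_zero])

end Adjoint

/-- The residue of `a ∂^i · B^*`. -/
theorem finsum_mul_zchoose_smul_iterate_adj_coeff (B : PDO R) (a : R) (i : ℤ) :
    ∑ᶠ k : ℕ, a * (zchoose i k • (⇑d)^[k] ((adj d B).coeff (-1 - i + k)))
      = (((-1 : ℤˣ) ^ (-1 - i) : ℤˣ) : ℤ) • (a * B.coeff (-1 - i)) := by
  classical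
  obtain ⟨M, hM⟩ := B.bdd
  set K := (M + 1 + i).toNat + 1
  have hK : M + 1 + i < K := by have := Int.self_le_toNat (M + 1 + i); omega
  set g : ℕ → R := fun s =>
    (((-1 : ℤˣ) ^ (-1 - i + s) : ℤˣ) : ℤ) • (a * (⇑d)^[s] (B.coeff (-1 - i + s)))
  have hsupp : (Function.support fun k : ℕ =>
      a * (zchoose i k • (⇑d)^[k] ((adj d B).coeff (-1 - i + k)))) ⊆ Finset.range K := by
    intro k hk
    by_contra hkK
    rw [Function.mem_support] at hk
    rw [Finset.coe_range, Set.mem_Iio, not_lt] at hkK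
    exact hk (by rw [adj_coeff_eq_zero d hM (by omega), iterate_map_zero, smul_zero, mul_zero])
  have hterm : ∀ k ∈ Finset.range K,
      a * (zchoose i k • (⇑d)^[k] ((adj d B).coeff (-1 - i + k)))
        = ∑ j ∈ Finset.range (K - k), (zchoose i k * zchoose (-1 - i + ↑(k + j)) j) • g (k + j) := by
    intro k hk
    rw [Finset.mem_range] at hk
    rw [adj_coeff_eq_sum d hM (K := K - k) (by omega), iterate_map_finset_sum, Finset.smul_sum,
      Finset.mul_sum]
    refine Finset.sum_congr rfl fun j _ => ?_
    rw [show -1 - i + k + j = -1 - i + ↑(k + j) by push_cast; ring, iterate_map_zsmul,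
      iterate_map_zsmul, ← Function.iterate_add_apply]
    simp only [g, mul_smul_comm, smul_smul]
    ring_nf
  calc ∑ᶠ k : ℕ, a * (zchoose i k • (⇑d)^[k] ((adj d B).coeff (-1 - i + k)))
      = ∑ k ∈ Finset.range K, a * (zchoose i k • (⇑d)^[k] ((adj d B).coeff (-1 - i + k))) :=
        finsum_eq_sum_of_support_subset _ hsupp
    _ = ∑ k ∈ Finset.range K, ∑ j ∈ Finset.range (K - k),
          (zchoose i k * zchoose (-1 - i + ↑(k + j)) j) • g (k + j) := Finset.sum_congr rfl hterm
    _ = ∑ s ∈ Finset.range K, ∑ k ∈ Finset.range (s + 1),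
          (zchoose i k * zchoose (-1 - i + s) (s - k)) • g s := by
        rw [← Finset.sum_range_diag_flip]
        refine Finset.sum_congr rfl fun s _ => Finset.sum_congr rfl fun k hk => ?_
        rw [Nat.add_sub_cancel' (Nat.lt_succ_iff.mp (Finset.mem_range.mp hk))]
    _ = g 0 := sum_range_sum_zchoose_mul_zchoose_smul i g (Nat.succ_pos _)
    _ = _ := by simp [g]

end PDO

end ExtendedDToda

open ExtendedDToda ExtendedDToda.PDO in
/-- the Dickey residue lemma:
`Res_{z=0} dz (A(y,∂)(e^{yz}) · B(y,∂)(e^{-yz})) = Res_∂(A·B^*)`.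
The left-hand side is the coefficient of `z^{-1}` of the product of the two
Laurent series `A(e^{yz}) = Σ_i a_i z^i e^{yz}` and
`B(e^{-yz}) = Σ_j b_j (-z)^j e^{-yz}` (the exponentials cancel). -/
theorem statement2 {R : Type} [CommRing R] (d : Derivation ℤ R R) (A B : PDO R) :
    (∑ᶠ j : ℤ, (((-1 : ℤˣ) ^ j : ℤˣ) : ℤ) • (A.coeff (-1 - j) * B.coeff j))
      = Res (mul d A (adj d B)) := by
  rw [Res, mul_coeff_eq_finsum_finsum,
    finsum_congr fun i => finsum_mul_zchoose_smul_iterate_adj_coeff d B (A.coeff i) i,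
    ← finsum_comp_equiv (Equiv.subLeft (-1))]
  simp only [Equiv.subLeft_apply, sub_sub_cancel]
end

section
/- Let R be a commutative differential ring. For every pseudodifferential operator P = ∂² + p_1∂ + p_0 + p_{-1}∂^{-1} + p_{-2}∂^{-2} + ⋯ of order 2 with leading coefficient 1, and assuming 2 is invertible in R, there exists a unique pseudodifferential operator L = ∂ + b_0 + b_1∂^{-1} + b_2∂^{-2} + ⋯ of order 1 with leading coefficient 1 such that L² = P. In particular, if p_1 = 0 then b_0 = 0. -/
/-!
Write `L = ∂ + b_0 + b_1 ∂⁻¹ + ⋯`. If two operators of order `≤ 1` agree in all degrees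
`≥ n`, the coefficients of `∂^n` in their squares differ by `2 b_1 (b_{n-1} - b'_{n-1})`:
every other contribution only involves coefficients in degrees `≥ n`. For monic operators
this is the recursion `2 b_i + (terms in b_0, …, b_{i-1}) = p_{1-i}`, so with `2` invertible the
`b_i` are determined one at a time, and the truncations they produce assemble into the
square root. At `i = 0` the recursion reads `2 b_0 = p_1`.
-/

open Finset

namespace ExtendedDToda.PDO

variable {R : Type} [CommRing R] (d : Derivation ℤ R R)

@[ext]
theorem ext {A B : PDO R} (h : ∀ n, A.coeff n = B.coeff n) : A = B := by
  cases A; cases B; congr; exact funext h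

theorem coeff_Dpow (k n : ℤ) : (Dpow k : PDO R).coeff n = if n = k then 1 else 0 := rfl

theorem zchoose_zero (n : ℤ) : zchoose n 0 = 1 := by
  unfold zchoose; split <;> simp

def mulTerm (L M : PDO R) (n : ℤ) (p : ℤ × ℕ) : R :=
  L.coeff p.1 * (zchoose p.1 p.2 • (⇑d)^[p.2] (M.coeff (n - p.1 + p.2)))

theorem coeff_mul (L M : PDO R) (n : ℤ) :
    (mul d L M).coeff n = ∑ᶠ p, mulTerm d L M n p := rfl

variable {d}

theorem mulTerm_eq_zero_of_left {L M : PDO R} {n : ℤ} {p : ℤ × ℕ} (h : L.coeff p.1 = 0) :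
    mulTerm d L M n p = 0 := by
  simp [mulTerm, h]

theorem mulTerm_eq_zero_of_right {L M : PDO R} {n : ℤ} {p : ℤ × ℕ}
    (h : M.coeff (n - p.1 + p.2) = 0) : mulTerm d L M n p = 0 := by
  simp [mulTerm, h, Function.iterate_fixed (map_zero d)]

variable (d)

theorem mulTerm_zero_snd (L M : PDO R) (n k : ℤ) :
    mulTerm d L M n (k, 0) = L.coeff k * M.coeff (n - k) := by
  simp [mulTerm, zchoose_zero]

theorem coeff_mul_of_lt {L M : PDO R} {a b : ℤ} (hL : ∀ m, a < m → L.coeff m = 0)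
    (hM : ∀ m, b < m → M.coeff m = 0) {n : ℤ} (hn : a + b < n) :
    (mul d L M).coeff n = 0 := by
  refine finsum_eq_zero_of_forall_eq_zero fun p => ?_
  by_cases hp : a < p.1
  · exact mulTerm_eq_zero_of_left (hL _ hp)
  · exact mulTerm_eq_zero_of_right (hM _ (by omega))

theorem coeff_mul_add {L M : PDO R} {a b : ℤ} (hL : ∀ m, a < m → L.coeff m = 0)
    (hM : ∀ m, b < m → M.coeff m = 0) :
    (mul d L M).coeff (a + b) = L.coeff a * M.coeff b := by
  rw [coeff_mul, finsum_eq_single _ (a, 0), mulTerm_zero_snd, add_sub_cancel_left]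
  rintro ⟨k, j⟩ hp
  rw [Ne, Prod.ext_iff] at hp
  by_cases hk : a < k
  · exact mulTerm_eq_zero_of_left (hL _ hk)
  · exact mulTerm_eq_zero_of_right (hM _ (by simp only at hp ⊢; omega))

theorem mul_Dpow_one_Dpow_one : mul d (Dpow 1) (Dpow 1) = (Dpow 2 : PDO R) := by
  have hD : ∀ m, (1 : ℤ) < m → (Dpow 1 : PDO R).coeff m = 0 := fun m hm => if_neg hm.ne'
  ext n
  rcases lt_trichotomy n 2 with hn | rfl | hn
  · rw [coeff_mul, coeff_Dpow, if_neg hn.ne]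
    refine finsum_eq_zero_of_forall_eq_zero fun ⟨k, j⟩ => ?_
    by_cases hk : k = 1
    · subst hk
      cases j with
      | zero => exact mulTerm_eq_zero_of_right (if_neg (by simp only; omega))
      | succ j =>
        simp only [mulTerm, Function.iterate_succ_apply, coeff_Dpow]
        split_ifs <;> simp [Function.iterate_fixed (map_zero d)]
    · exact mulTerm_eq_zero_of_left (if_neg hk)
  · exact (coeff_mul_add d hD hD).trans (by simp [coeff_Dpow])
  · rw [coeff_mul_of_lt d hD hD hn, coeff_Dpow, if_neg hn.ne']

noncomputable def orderOneBox (n : ℤ) : Finset (ℤ × ℕ) := Icc (n - 1) 1 ×ˢ range (3 - n).toNat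

theorem coeff_mul_eq_sum_orderOneBox {L M : PDO R} (hL : ∀ m, 1 < m → L.coeff m = 0)
    (hM : ∀ m, 1 < m → M.coeff m = 0) (n : ℤ) :
    (mul d L M).coeff n = ∑ p ∈ orderOneBox n, mulTerm d L M n p := by
  refine finsum_eq_sum_of_support_subset _ fun p hp => ?_
  have h1 : p.1 ≤ 1 := by
    by_contra h
    exact hp (mulTerm_eq_zero_of_left (hL _ (by omega)))
  have h2 : n - p.1 + p.2 ≤ 1 := by
    by_contra h
    exact hp (mulTerm_eq_zero_of_right (hM _ (by omega)))
  simp only [orderOneBox, coe_product, Set.mem_prod, mem_coe, mem_Icc, mem_range]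
  omega

variable {d}

theorem mulTerm_self_eq_of_eqOn {L L' : PDO R} {n : ℤ} (hL : ∀ m, 1 < m → L.coeff m = 0)
    (hL' : ∀ m, 1 < m → L'.coeff m = 0) (hLL' : ∀ m, n ≤ m → L.coeff m = L'.coeff m)
    {p : ℤ × ℕ} (hp : p ≠ (n - 1, 0)) (hp' : p ≠ (1, 0)) :
    mulTerm d L L n p = mulTerm d L' L' n p := by
  obtain ⟨k, j⟩ := p
  simp only [Ne, Prod.ext_iff] at hp hp'
  by_cases hk : 1 < k
  · rw [mulTerm_eq_zero_of_left (hL _ hk), mulTerm_eq_zero_of_left (hL' _ hk)]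
  by_cases hkj : n ≤ k ∧ n ≤ n - k + j
  · rw [mulTerm, mulTerm, hLL' _ hkj.1, hLL' _ hkj.2]
  · have h : 1 < n - k + j := by omega
    rw [mulTerm_eq_zero_of_right (hL _ h), mulTerm_eq_zero_of_right (hL' _ h)]

variable (d)

theorem coeff_mul_self_eq_of_eqOn {L L' : PDO R} {n : ℤ} (hL : ∀ m, 1 < m → L.coeff m = 0)
    (hL' : ∀ m, 1 < m → L'.coeff m = 0) (hLL' : ∀ m, n ≤ m → L.coeff m = L'.coeff m)
    (hn : n ≤ 1) :
    (mul d L L).coeff n =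
      (mul d L' L').coeff n + 2 * L.coeff 1 * (L.coeff (n - 1) - L'.coeff (n - 1)) := by
  have hpair : {(n - 1, 0), (1, 0)} ⊆ orderOneBox n := by
    intro p hp
    simp only [mem_insert, mem_singleton] at hp
    simp only [orderOneBox, mem_product, mem_Icc, mem_range]
    rcases hp with rfl | rfl <;> omega
  have hne : ((n - 1, 0) : ℤ × ℕ) ≠ (1, 0) := by
    simp only [Ne, Prod.ext_iff]; omega
  rw [coeff_mul_eq_sum_orderOneBox d hL hL, coeff_mul_eq_sum_orderOneBox d hL' hL',
    ← sum_sdiff hpair, ← sum_sdiff hpair (f := mulTerm d L' L' n), sum_pair hne, sum_pair hne,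
    sum_congr rfl fun p hp => mulTerm_self_eq_of_eqOn hL hL' hLL'
      (fun h => (mem_sdiff.1 hp).2 (by simp [h])) (fun h => (mem_sdiff.1 hp).2 (by simp [h])),
    mulTerm_zero_snd, mulTerm_zero_snd, mulTerm_zero_snd, mulTerm_zero_snd, sub_sub_cancel,
    hLL' 1 hn]
  ring

def IsMonicOrderOne (L : PDO R) : Prop := L.coeff 1 = 1 ∧ ∀ n : ℤ, 1 < n → L.coeff n = 0

theorem isMonicOrderOne_Dpow_one : IsMonicOrderOne (Dpow 1 : PDO R) :=
  ⟨by simp [coeff_Dpow], fun _ hn => if_neg hn.ne'⟩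

namespace IsMonicOrderOne

variable {d} {L L' : PDO R}

theorem coeff_eq (hL : IsMonicOrderOne L) (hL' : IsMonicOrderOne L') {m : ℤ} (hm : 1 ≤ m) :
    L.coeff m = L'.coeff m := by
  rcases hm.eq_or_lt with rfl | hm
  · rw [hL.1, hL'.1]
  · rw [hL.2 m hm, hL'.2 m hm]

theorem congr (hL' : IsMonicOrderOne L') (h : ∀ m, 1 ≤ m → L.coeff m = L'.coeff m) :
    IsMonicOrderOne L :=
  ⟨(h 1 le_rfl).trans hL'.1, fun m hm => (h m hm.le).trans (hL'.2 m hm)⟩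

theorem coeff_one_mul_self (hL : IsMonicOrderOne L) : (mul d L L).coeff 1 = 2 * L.coeff 0 := by
  have hD := isMonicOrderOne_Dpow_one (R := R)
  rw [coeff_mul_self_eq_of_eqOn d hL.2 hD.2 (fun _ hm => hL.coeff_eq hD hm) le_rfl,
    mul_Dpow_one_Dpow_one, hL.1]
  simp [coeff_Dpow]

theorem eq_of_mul_self_eq [Invertible (2 : R)] (hL : IsMonicOrderOne L)
    (hL' : IsMonicOrderOne L') (h : mul d L L = mul d L' L') : L = L' := by
  have hagree : ∀ i : ℕ, ∀ m, 1 - (i : ℤ) ≤ m → L.coeff m = L'.coeff m := by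
    intro i
    induction i with
    | zero => exact fun m hm => hL.coeff_eq hL' (by simpa using hm)
    | succ i ih =>
      intro m hm
      rcases (show m = 1 - (i : ℤ) - 1 ∨ 1 - (i : ℤ) ≤ m by push_cast at hm; omega)
        with rfl | hm
      · have key := coeff_mul_self_eq_of_eqOn d hL.2 hL'.2 ih (by omega)
        rwa [h, hL.1, mul_one, left_eq_add, (isUnit_of_invertible (2 : R)).mul_right_eq_zero,
          sub_eq_zero] at key
      · exact ih m hm
  ext m
  exact hagree (1 - m).toNat m (by omega)

end IsMonicOrderOne

def setCoeff (P : PDO R) (k : ℤ) (c : R) : PDO R where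
  coeff := Function.update P.coeff k c
  bdd := by
    obtain ⟨N, hN⟩ := P.bdd
    exact ⟨max N k, fun n hn => by rw [Function.update_of_ne (by omega), hN n (by omega)]⟩

section Sqrt

variable [Invertible (2 : R)] (P : PDO R)

/-- `sqrtApprox d P i = ∂ + b_0 + ⋯ + b_{i-1} ∂^{1-i}`. -/
noncomputable def sqrtApprox : ℕ → PDO R
  | 0 => Dpow 1
  | i + 1 =>
    let T := sqrtApprox i
    setCoeff T (-i) (⅟2 * (P.coeff (1 - i) - (mul d T T).coeff (1 - i)))

theorem coeff_sqrtApprox_succ (i : ℕ) :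
    (sqrtApprox d P (i + 1)).coeff (-i) =
      ⅟2 * (P.coeff (1 - i) - (mul d (sqrtApprox d P i) (sqrtApprox d P i)).coeff (1 - i)) :=
  Function.update_self ..

theorem coeff_sqrtApprox_of_lt {i : ℕ} {m : ℤ} (hm : m < 1 - i) :
    (sqrtApprox d P i).coeff m = 0 := by
  induction i with
  | zero => exact if_neg (by omega)
  | succ i ih =>
    push_cast at hm
    exact (Function.update_of_ne (by omega) ..).trans (ih (by omega))

theorem coeff_sqrtApprox_of_le {i j : ℕ} (hij : i ≤ j) {m : ℤ} (hm : 1 - i ≤ m) :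
    (sqrtApprox d P j).coeff m = (sqrtApprox d P i).coeff m := by
  induction j, hij using Nat.le_induction with
  | base => rfl
  | succ j hij ih => exact (Function.update_of_ne (by omega) ..).trans ih

theorem isMonicOrderOne_sqrtApprox (i : ℕ) : IsMonicOrderOne (sqrtApprox d P i) :=
  isMonicOrderOne_Dpow_one.congr fun _ hm =>
    coeff_sqrtApprox_of_le d P (Nat.zero_le i) (by simpa using hm)

noncomputable def sqrt : PDO R where
  coeff m := (sqrtApprox d P (1 - m).toNat).coeff m
  bdd := ⟨1, fun m hm => by rw [show (1 - m).toNat = 0 by omega]; exact if_neg hm.ne'⟩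

theorem coeff_sqrt {i : ℕ} {m : ℤ} (hm : 1 - i ≤ m) :
    (sqrt d P).coeff m = (sqrtApprox d P i).coeff m :=
  (coeff_sqrtApprox_of_le d P (by omega) (by omega)).symm

theorem isMonicOrderOne_sqrt : IsMonicOrderOne (sqrt d P) :=
  (isMonicOrderOne_sqrtApprox d P 0).congr fun _ hm => coeff_sqrt d P (by simpa using hm)

theorem mul_sqrt_self (hP2 : P.coeff 2 = 1) (hPtop : ∀ n : ℤ, 2 < n → P.coeff n = 0) :
    mul d (sqrt d P) (sqrt d P) = P := by
  have hS := isMonicOrderOne_sqrt d P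
  ext n
  rcases lt_trichotomy n 2 with hn | rfl | hn
  · obtain ⟨i, rfl⟩ : ∃ i : ℕ, n = 1 - i := ⟨(1 - n).toNat, by omega⟩
    have hT := isMonicOrderOne_sqrtApprox d P i
    rw [coeff_mul_self_eq_of_eqOn d hS.2 hT.2 (fun m hm => coeff_sqrt d P hm) (by omega), hS.1,
      show 1 - (i : ℤ) - 1 = -i by ring, coeff_sqrt d P (i := i + 1) (m := -i) (by push_cast; omega),
      coeff_sqrtApprox_succ, coeff_sqrtApprox_of_lt d P (i := i) (m := -i) (by omega), mul_one,
      sub_zero, ← mul_assoc, mul_invOf_self, one_mul, add_sub_cancel]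
  · exact (coeff_mul_add d hS.2 hS.2).trans (by rw [hS.1, mul_one, hP2])
  · rw [coeff_mul_of_lt d hS.2 hS.2 hn, hPtop n hn]

end Sqrt

end ExtendedDToda.PDO

open ExtendedDToda ExtendedDToda.PDO in
/-- every monic pseudodifferential operator
`P = ∂² + p_1∂ + p_0 + p_{-1}∂^{-1} + ⋯` of order 2 has a unique monic square
root `L = ∂ + b_0 + b_1∂^{-1} + ⋯` of order 1 (2 invertible in `R`); moreover
if `p_1 = 0` then `b_0 = 0`. -/
theorem statement9 {R : Type} [CommRing R] [Invertible (2 : R)]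
    (d : Derivation ℤ R R) (P : PDO R)
    (hP2 : P.coeff 2 = 1) (hPtop : ∀ n : ℤ, 2 < n → P.coeff n = 0) :
    (∃! L : PDO R, L.coeff 1 = 1 ∧ (∀ n : ℤ, 1 < n → L.coeff n = 0) ∧
        mul d L L = P) ∧
    (∀ L : PDO R, L.coeff 1 = 1 → (∀ n : ℤ, 1 < n → L.coeff n = 0) →
        mul d L L = P → P.coeff 1 = 0 → L.coeff 0 = 0) := by
  have hsq := mul_sqrt_self d P hP2 hPtop
  have hS := isMonicOrderOne_sqrt d P
  refine ⟨⟨sqrt d P, ⟨hS.1, hS.2, hsq⟩, fun L ⟨hL1, hLtop, hL⟩ => ?_⟩,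
    fun L hL1 hLtop hL hP1 => ?_⟩
  · exact IsMonicOrderOne.eq_of_mul_self_eq ⟨hL1, hLtop⟩ hS (hL.trans hsq.symm)
  · have h := IsMonicOrderOne.coeff_one_mul_self (d := d) ⟨hL1, hLtop⟩
    rwa [hL, hP1, eq_comm, (isUnit_of_invertible (2 : R)).mul_right_eq_zero] at h
end

section
/- Let E = R[Λ, Λ^{-1}, ∂_2, ∂_3] be the ring of differential-difference operators over a commutative ring R equipped with commuting derivations ∂_2, ∂_3 and an automorphism Λ (all three pairwise commuting as operators, with Λ·f = f[1]·Λ and ∂_a·f = f·∂_a + ∂_a(f) for f ∈ R). Let q_1, q_2, q_3 ∈ R and set H_1 = ∂_2∂_3 + q_1, H_2 = (Λ-1)∂_2 - q_2(Λ+1), H_3 = (Λ+1)∂_3 - q_3(Λ-1). Assume ∂_2(q_3) = ∂_3(q_2) = q_1 + q_2q_3. Then (Λ+1)·H_1 = ∂_2·H_3 + q_3·H_2 holds in E, provided additionally q_1 + q_1[1] + 2q_2q_3 = 0. -/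
/-! Since `Λ` commutes with `∂_2`, the second-order parts of both sides agree and the Leibniz
rule turns `∂_2 · q_3 (Λ - 1)` into `q_3 (Λ - 1) ∂_2 + ∂_2(q_3) (Λ - 1)`; what remains is
free of `∂` and affine in `Λ`, and the coefficients of `Λ` agree precisely by the condition
`q_1 + q_1[1] + 2 q_2 q_3 = 0`. -/

theorem mul_mul_eq_of_commute {E : Type*} [Ring E] {D a b X : E}
    (hDa : D * a = a * D + b) (hDX : Commute D X) :
    D * (a * X) = a * (X * D) + b * X := by
  rw [← mul_assoc, hDa, add_mul, mul_assoc, hDX.eq]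

theorem statement12_general {R E : Type} [CommRing R] [Ring E]
    (σ : RingAut R) (d2 : Derivation ℤ R R)
    (ι : R →+* E) (Λ D2 D3 : E)
    (hΛι : ∀ f : R, Λ * ι f = ι (σ f) * Λ)
    (hD2ι : ∀ f : R, D2 * ι f = ι f * D2 + ι (d2 f))
    (hΛD2 : Λ * D2 = D2 * Λ)
    (q1 q2 q3 : R)
    (h23 : d2 q3 = q1 + q2 * q3)
    (hq1 : q1 + σ q1 + 2 * (q2 * q3) = 0) :
    (Λ + 1) * (D2 * D3 + ι q1)
      = D2 * ((Λ + 1) * D3 - ι q3 * (Λ - 1))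
        + ι q3 * ((Λ - 1) * D2 - ι q2 * (Λ + 1)) := by
  have hΛ : Commute Λ D2 := hΛD2
  have hshift : ι (σ q1) = -ι q1 - 2 * (ι q3 * ι q2) := by
    rw [← map_mul, ← map_ofNat ι 2, ← map_mul, ← map_neg, ← map_sub]
    congr 1
    linear_combination hq1
  have hleading : D2 * ((Λ + 1) * D3) = (Λ + 1) * (D2 * D3) := by
    rw [← mul_assoc, ← mul_assoc, (hΛ.add_left (Commute.one_left D2)).eq]
  have hleibniz : D2 * (ι q3 * (Λ - 1)) = ι q3 * ((Λ - 1) * D2) + ι (d2 q3) * (Λ - 1) :=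
    mul_mul_eq_of_commute (hD2ι q3) (hΛ.sub_left (Commute.one_left D2)).symm
  rw [mul_sub D2, hleading, hleibniz, mul_add (Λ + 1), add_mul Λ 1 (ι q1), hΛι, hshift, h23,
    mul_comm q2 q3, map_add, map_mul]
  noncomm_ring

/-- in the ring `E = R[Λ, Λ^{-1}, ∂_2, ∂_3]` of
differential-difference operators over a commutative ring `R` with pairwise
commuting derivations `∂_2, ∂_3` and automorphism `σ` (so `Λ·f = σ(f)·Λ` and
`∂_a·f = f·∂_a + ∂_a(f)`), set `H_1 = ∂_2∂_3 + q_1`,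
`H_2 = (Λ-1)∂_2 - q_2(Λ+1)`, `H_3 = (Λ+1)∂_3 - q_3(Λ-1)`.
If `∂_2(q_3) = ∂_3(q_2) = q_1 + q_2q_3` and `q_1 + q_1[1] + 2q_2q_3 = 0`, then
`(Λ+1)·H_1 = ∂_2·H_3 + q_3·H_2`. -/
theorem statement12 {R E : Type} [CommRing R] [Ring E]
    (σ : RingAut R) (d2 d3 : Derivation ℤ R R)
    (hcommder : ∀ f : R, d2 (d3 f) = d3 (d2 f))
    (hσd2 : ∀ f : R, d2 (σ f) = σ (d2 f))
    (hσd3 : ∀ f : R, d3 (σ f) = σ (d3 f))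
    (ι : R →+* E) (Λ Λi D2 D3 : E)
    (hΛunit : Λ * Λi = 1) (hΛunit' : Λi * Λ = 1)
    (hΛι : ∀ f : R, Λ * ι f = ι (σ f) * Λ)
    (hD2ι : ∀ f : R, D2 * ι f = ι f * D2 + ι (d2 f))
    (hD3ι : ∀ f : R, D3 * ι f = ι f * D3 + ι (d3 f))
    (hD23 : D2 * D3 = D3 * D2)
    (hΛD2 : Λ * D2 = D2 * Λ) (hΛD3 : Λ * D3 = D3 * Λ)
    (q1 q2 q3 : R)
    (h23 : d2 q3 = q1 + q2 * q3) (h32 : d3 q2 = q1 + q2 * q3)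
    (hq1 : q1 + σ q1 + 2 * (q2 * q3) = 0) :
    (Λ + 1) * (D2 * D3 + ι q1)
      = D2 * ((Λ + 1) * D3 - ι q3 * (Λ - 1))
        + ι q3 * ((Λ - 1) * D2 - ι q2 * (Λ + 1)) :=
  statement12_general σ d2 ι Λ D2 D3 hΛι hD2ι hΛD2 q1 q2 q3 h23 hq1
end

section
/- Let E = R[Λ, Λ^{-1}, ∂_2, ∂_3] be the ring of differential-difference operators over a commutative ℚ-algebra R with commuting derivations ∂_2, ∂_3 and automorphism Λ (relations Λf = f[1]Λ, ∂_a f = f∂_a + ∂_a(f)). Let q_1, q_2, q_3 ∈ R with ∂_2(q_3) = ∂_3(q_2) = q_1 + q_2q_3, and set H_1 = ∂_2∂_3 + q_1, H_2 = (Λ-1)∂_2 - q_2(Λ+1), H_3 = (Λ+1)∂_3 - q_3(Λ-1). Then H_1 = (1/2)(∂_2 - q_2)·H_3 - (1/2)(∂_3 - q_3)·H_2 holds in E. -/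
/-!
Since `Λ` commutes with `∂₂` and `∂₃`, `H₃ = (∂₃ - q₃)Λ + (∂₃ + q₃)` and
`H₂ = (∂₂ - q₂)Λ - (∂₂ + q₂)`. The `Λ`-terms of `(∂₂ - q₂)H₃ - (∂₃ - q₃)H₂` therefore collapse
to `[∂₂ - q₂, ∂₃ - q₃]Λ`, and this commutator vanishes precisely because `∂₂(q₃) = ∂₃(q₂)`.
The remaining `Λ`-free terms add up to `2(∂₂∂₃ + q₁)` because `∂₂(q₃) = q₁ + q₂q₃`.
-/

section ZeroCurvature

variable {E : Type*} [Ring E] {Λ D₂ D₃ a b c : E}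

theorem commute_sub_sub_of_zeroCurvature (hD : Commute D₂ D₃) (hab : Commute a b)
    (h₂ : D₂ * b = b * D₂ + (c + a * b)) (h₃ : D₃ * a = a * D₃ + (c + a * b)) :
    Commute (D₂ - a) (D₃ - b) := by
  simp only [Commute, SemiconjBy, sub_mul, mul_sub, h₂, h₃, hD.eq, hab.eq]
  abel

theorem sub_mul_add_add_sub_mul_add_of_zeroCurvature (hD : Commute D₂ D₃) (hab : Commute a b)
    (h₂ : D₂ * b = b * D₂ + (c + a * b)) (h₃ : D₃ * a = a * D₃ + (c + a * b)) :
    (D₂ - a) * (D₃ + b) + (D₃ - b) * (D₂ + a) = 2 * (D₂ * D₃ + c) := by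
  simp only [sub_mul, mul_add, h₂, h₃, hD.eq, hab.eq]
  noncomm_ring

theorem sub_mul_H₃_sub_sub_mul_H₂ (hD : Commute D₂ D₃) (hab : Commute a b)
    (hΛ₂ : Commute Λ D₂) (hΛ₃ : Commute Λ D₃)
    (h₂ : D₂ * b = b * D₂ + (c + a * b)) (h₃ : D₃ * a = a * D₃ + (c + a * b)) :
    (D₂ - a) * ((Λ + 1) * D₃ - b * (Λ - 1)) - (D₃ - b) * ((Λ - 1) * D₂ - a * (Λ + 1))
      = 2 * (D₂ * D₃ + c) := by
  have hH₃ : (Λ + 1) * D₃ - b * (Λ - 1) = (D₃ - b) * Λ + (D₃ + b) := by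
    rw [add_mul, hΛ₃.eq]; noncomm_ring
  have hH₂ : (Λ - 1) * D₂ - a * (Λ + 1) = (D₂ - a) * Λ - (D₂ + a) := by
    rw [sub_mul, hΛ₂.eq]; noncomm_ring
  rw [hH₃, hH₂, mul_add, mul_sub, ← mul_assoc, ← mul_assoc,
    (commute_sub_sub_of_zeroCurvature hD hab h₂ h₃).eq,
    ← sub_mul_add_add_sub_mul_add_of_zeroCurvature hD hab h₂ h₃]
  abel

end ZeroCurvature

theorem statement13_general {R E : Type} [CommRing R]
    [Ring E] [Algebra ℚ E]
    (d2 d3 : Derivation ℤ R R)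
    (ι : R →+* E) (Λ D2 D3 : E)
    (hD2ι : ∀ f : R, D2 * ι f = ι f * D2 + ι (d2 f))
    (hD3ι : ∀ f : R, D3 * ι f = ι f * D3 + ι (d3 f))
    (hD23 : D2 * D3 = D3 * D2)
    (hΛD2 : Λ * D2 = D2 * Λ) (hΛD3 : Λ * D3 = D3 * Λ)
    (q1 q2 q3 : R)
    (h23 : d2 q3 = q1 + q2 * q3) (h32 : d3 q2 = q1 + q2 * q3) :
    D2 * D3 + ι q1
      = ((1 : ℚ) / 2) • ((D2 - ι q2) * ((Λ + 1) * D3 - ι q3 * (Λ - 1)))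
        - ((1 : ℚ) / 2) • ((D3 - ι q3) * ((Λ - 1) * D2 - ι q2 * (Λ + 1))) := by
  have hq : Commute (ι q2) (ι q3) := (Commute.all q2 q3).map ι
  have h₂ : D2 * ι q3 = ι q3 * D2 + (ι q1 + ι q2 * ι q3) := by
    rw [hD2ι, h23, map_add, map_mul]
  have h₃ : D3 * ι q2 = ι q2 * D3 + (ι q1 + ι q2 * ι q3) := by
    rw [hD3ι, h32, map_add, map_mul]
  rw [← smul_sub, sub_mul_H₃_sub_sub_mul_H₂ hD23 hq hΛD2 hΛD3 h₂ h₃, two_mul, ← two_smul ℚ,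
    smul_smul]
  norm_num

/-- in the ring `E = R[Λ, Λ^{-1}, ∂_2, ∂_3]` of
differential-difference operators over a commutative `ℚ`-algebra `R` with
pairwise commuting derivations `∂_2, ∂_3` and automorphism `σ` (relations
`Λ·f = σ(f)·Λ`, `∂_a·f = f·∂_a + ∂_a(f)`), set `H_1 = ∂_2∂_3 + q_1`,
`H_2 = (Λ-1)∂_2 - q_2(Λ+1)`, `H_3 = (Λ+1)∂_3 - q_3(Λ-1)`.
If `∂_2(q_3) = ∂_3(q_2) = q_1 + q_2q_3`, then
`H_1 = (1/2)(∂_2 - q_2)·H_3 - (1/2)(∂_3 - q_3)·H_2`. -/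
theorem statement13 {R E : Type} [CommRing R] [Algebra ℚ R]
    [Ring E] [Algebra ℚ E]
    (σ : RingAut R) (d2 d3 : Derivation ℤ R R)
    (hcommder : ∀ f : R, d2 (d3 f) = d3 (d2 f))
    (hσd2 : ∀ f : R, d2 (σ f) = σ (d2 f))
    (hσd3 : ∀ f : R, d3 (σ f) = σ (d3 f))
    (ι : R →+* E) (Λ Λi D2 D3 : E)
    (hΛunit : Λ * Λi = 1) (hΛunit' : Λi * Λ = 1)
    (hΛι : ∀ f : R, Λ * ι f = ι (σ f) * Λ)
    (hD2ι : ∀ f : R, D2 * ι f = ι f * D2 + ι (d2 f))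
    (hD3ι : ∀ f : R, D3 * ι f = ι f * D3 + ι (d3 f))
    (hD23 : D2 * D3 = D3 * D2)
    (hΛD2 : Λ * D2 = D2 * Λ) (hΛD3 : Λ * D3 = D3 * Λ)
    (q1 q2 q3 : R)
    (h23 : d2 q3 = q1 + q2 * q3) (h32 : d3 q2 = q1 + q2 * q3) :
    D2 * D3 + ι q1
      = ((1 : ℚ) / 2) • ((D2 - ι q2) * ((Λ + 1) * D3 - ι q3 * (Λ - 1)))
        - ((1 : ℚ) / 2) • ((D3 - ι q3) * ((Λ - 1) * D2 - ι q2 * (Λ + 1))) :=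
  statement13_general d2 d3 ι Λ D2 D3 hD2ι hD3ι hD23 hΛD2 hΛD3 q1 q2 q3 h23 h32
end
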